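/- arXiv:2202.01992 — 8 statements merged into one kernel-verified Lean document; each statement's English description precedes it below -/
import Mathlib

section
/- Let n ≥ 2 be an integer. Set A_k = k(k−1)(k−2)(k−3)/8, B_k = k(k−1)(k−2)/6 and C(m,2) = m(m−1)/2. Then real numbers α, β, γ satisfy the system (i) α·C(n+2,2) − 2β·C(n+1,2) + γ·C(n,2) = 0, (ii) α·B_{n+2} − γ·B_{n+1} = 0, (iii) α·A_{n+2} − β·C(n+1,2)² + γ·(C(n+1,2)·C(n,2) − A_{n+1}) = 0, if and only if there exists ω ∈ ℝ with α = ω·n(n+1)(n−1), β = ω·(n−1)(n+2)(2n+1)/2, and γ = ω·n(n+1)(n+2). -/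
/-! The second equation, after cancelling `n(n+1)/6`, reads `α(n+2) = γ(n−1)`, so `(α, γ)` is
proportional to `(n(n+1)(n−1), n(n+1)(n+2))`; the first equation then determines `β`. Hence the
solutions form at most a line, and the third equation imposes nothing new: the generator
satisfies all three equations identically in `n`. -/

namespace ArcLengthCoefficients

variable {x α β γ : ℝ}

lemma alpha_mul_eq_gamma_mul (hx : 0 < x)
    (h : α * ((x + 2) * (x + 1) * x / 6) - γ * ((x + 1) * x * (x - 1) / 6) = 0) :
    α * (x + 2) = γ * (x - 1) :=
  mul_left_cancel₀ (by positivity : (x + 1) * x ≠ 0) (by linear_combination 6 * h)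

lemma exists_eq_smul_of_first_two_eqs (hx : 0 < x)
    (h₁ : α * ((x + 2) * (x + 1) / 2) - 2 * β * ((x + 1) * x / 2) + γ * (x * (x - 1) / 2) = 0)
    (h₂ : α * ((x + 2) * (x + 1) * x / 6) - γ * ((x + 1) * x * (x - 1) / 6) = 0) :
    ∃ ω : ℝ, α = ω * (x * (x + 1) * (x - 1)) ∧
      β = ω * ((x - 1) * (x + 2) * (2 * x + 1) / 2) ∧ γ = ω * (x * (x + 1) * (x + 2)) := by
  have hαγ := alpha_mul_eq_gamma_mul hx h₂
  have hd : x * (x + 1) * (x + 2) ≠ 0 := by positivity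
  refine ⟨γ / (x * (x + 1) * (x + 2)), ?_, ?_, ?_⟩
  · field_simp
    linear_combination hαγ
  · field_simp
    linear_combination (-2) * h₁ + (x + 1) * hαγ
  · field_simp

lemma generator_solves (ω x : ℝ) :
    let α := ω * (x * (x + 1) * (x - 1))
    let β := ω * ((x - 1) * (x + 2) * (2 * x + 1) / 2)
    let γ := ω * (x * (x + 1) * (x + 2))
    α * ((x + 2) * (x + 1) / 2) - 2 * β * ((x + 1) * x / 2) + γ * (x * (x - 1) / 2) = 0 ∧
      α * ((x + 2) * (x + 1) * x / 6) - γ * ((x + 1) * x * (x - 1) / 6) = 0 ∧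
      α * ((x + 2) * (x + 1) * x * (x - 1) / 8) - β * ((x + 1) * x / 2) ^ 2
        + γ * (((x + 1) * x / 2) * (x * (x - 1) / 2) - (x + 1) * x * (x - 1) * (x - 2) / 8) = 0 :=
  ⟨by ring, by ring, by ring⟩

end ArcLengthCoefficients

/-- Lemma 3.2 (lem-solP): the linear system determining the coefficients of the
fully affine arc length element in ℝⁿ has the one-dimensional solution space
spanned by `(n(n+1)(n−1), (n−1)(n+2)(2n+1)/2, n(n+1)(n+2))`.
Here `A_k = k(k−1)(k−2)(k−3)/8`, `B_k = k(k−1)(k−2)/6`, `C(m,2) = m(m−1)/2`. -/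
theorem arc_length_coefficient_system (n : ℕ) (hn : 2 ≤ n) (α β γ : ℝ) :
    (α * (((n : ℝ) + 2) * ((n : ℝ) + 1) / 2)
        - 2 * β * (((n : ℝ) + 1) * (n : ℝ) / 2)
        + γ * ((n : ℝ) * ((n : ℝ) - 1) / 2) = 0 ∧
      α * (((n : ℝ) + 2) * ((n : ℝ) + 1) * (n : ℝ) / 6)
        - γ * (((n : ℝ) + 1) * (n : ℝ) * ((n : ℝ) - 1) / 6) = 0 ∧
      α * (((n : ℝ) + 2) * ((n : ℝ) + 1) * (n : ℝ) * ((n : ℝ) - 1) / 8)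
        - β * (((n : ℝ) + 1) * (n : ℝ) / 2) ^ 2
        + γ * ((((n : ℝ) + 1) * (n : ℝ) / 2) * ((n : ℝ) * ((n : ℝ) - 1) / 2)
            - ((n : ℝ) + 1) * (n : ℝ) * ((n : ℝ) - 1) * ((n : ℝ) - 2) / 8) = 0)
    ↔ ∃ ω : ℝ,
        α = ω * ((n : ℝ) * ((n : ℝ) + 1) * ((n : ℝ) - 1)) ∧
        β = ω * (((n : ℝ) - 1) * ((n : ℝ) + 2) * (2 * (n : ℝ) + 1) / 2) ∧
        γ = ω * ((n : ℝ) * ((n : ℝ) + 1) * ((n : ℝ) + 2)) := by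
  have hn₀ : (0 : ℝ) < n := by exact_mod_cast (by omega : 0 < n)
  constructor
  · rintro ⟨h₁, h₂, -⟩
    exact ArcLengthCoefficients.exists_eq_smul_of_first_two_eqs hn₀ h₁ h₂
  · rintro ⟨ω, rfl, rfl, rfl⟩
    exact ArcLengthCoefficients.generator_solves ω n
end

section
/- Let n ≥ 2 and set α = n(n+1)(n−1), β = (n−1)(n+2)(2n+1)/2, γ = n(n+1)(n+2). For a smooth curve z : ℝ → ℝⁿ, define F(z)(p) = α·det[z⁽ⁿ⁺²⁾, z⁽ⁿ⁻¹⁾, …, z″, z′]/det[z⁽ⁿ⁾, z⁽ⁿ⁻¹⁾, …, z′] − β·(det[z⁽ⁿ⁺¹⁾, z⁽ⁿ⁻¹⁾, …, z′]/det[z⁽ⁿ⁾, …, z′])² + γ·det[z⁽ⁿ⁺¹⁾, z⁽ⁿ⁾, z⁽ⁿ⁻²⁾, …, z′]/det[z⁽ⁿ⁾, …, z′], all derivatives evaluated at p. Let x : ℝ → ℝⁿ be smooth with det[x⁽ⁿ⁾(p), …, x′(p)] ≠ 0, let A be an invertible n×n real matrix and b ∈ ℝⁿ, and let y(p) = A·x(p)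 + b. Then det[y⁽ⁿ⁾(p), …, y′(p)] ≠ 0 and F(y)(p) = F(x)(p). -/
open scoped ContDiff


/-- Determinant of the `n × n` matrix whose `j`-th column is the `ords j`-th
derivative of the curve `z : ℝ → ℝⁿ` evaluated at `p`. -/
noncomputable def detD (n : ℕ) (z : ℝ → (Fin n → ℝ)) (ords : Fin n → ℕ) (p : ℝ) : ℝ :=
  Matrix.det (Matrix.of fun i j => iteratedDeriv (ords j) z p i)

/-- The fully affine arc length integrand `F` of a curve `z : ℝ → ℝⁿ` at `p`. -/
noncomputable def fullyAffineF (n : ℕ) (z : ℝ → (Fin n → ℝ)) (p : ℝ) : ℝ :=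
  ((n : ℝ) * ((n : ℝ) + 1) * ((n : ℝ) - 1)) *
      detD n z (fun j => if (j : ℕ) = 0 then n + 2 else n - (j : ℕ)) p /
      detD n z (fun j => n - (j : ℕ)) p
    - (((n : ℝ) - 1) * ((n : ℝ) + 2) * (2 * (n : ℝ) + 1) / 2) *
      (detD n z (fun j => if (j : ℕ) = 0 then n + 1 else n - (j : ℕ)) p /
        detD n z (fun j => n - (j : ℕ)) p) ^ 2
    + ((n : ℝ) * ((n : ℝ) + 1) * ((n : ℝ) + 2)) *
      detD n z (fun j => if (j : ℕ) = 0 then n + 1 else if (j : ℕ) = 1 then n else n - (j : ℕ)) p /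
      detD n z (fun j => n - (j : ℕ)) p

private lemma deriv_mulVec {n : ℕ} (A : Matrix (Fin n) (Fin n) ℝ)
    {f : ℝ → (Fin n → ℝ)} (hf : ContDiff ℝ ∞ f) :
    deriv (fun q => A.mulVec (f q)) = fun q => A.mulVec (deriv f q) := by
  funext q
  have hL : HasFDerivAt (fun v : Fin n → ℝ => A.mulVec v)
      (Matrix.mulVecLin A).toContinuousLinearMap (f q) :=
    (Matrix.mulVecLin A).toContinuousLinearMap.hasFDerivAt
  have hfd : HasDerivAt f (deriv f q) q :=
    ((contDiff_infty_iff_deriv.mp hf).1 q).hasDerivAt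
  exact (hL.comp_hasDerivAt q hfd).deriv

private lemma iteratedDeriv_mulVec {n : ℕ} (A : Matrix (Fin n) (Fin n) ℝ) :
    ∀ (k : ℕ) (f : ℝ → (Fin n → ℝ)), ContDiff ℝ ∞ f →
      iteratedDeriv k (fun q => A.mulVec (f q)) = fun p => A.mulVec (iteratedDeriv k f p) := by
  intro k
  induction k with
  | zero => intro f hf; simp [iteratedDeriv_zero]
  | succ k ih =>
    intro f hf
    rw [iteratedDeriv_succ', deriv_mulVec A hf,
      ih _ ((contDiff_infty_iff_deriv.mp hf).2)]
    funext p
    rw [← iteratedDeriv_succ']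

private lemma iteratedDeriv_affine {n : ℕ} (A : Matrix (Fin n) (Fin n) ℝ)
    (b : Fin n → ℝ) {f : ℝ → (Fin n → ℝ)} (hf : ContDiff ℝ ∞ f)
    {k : ℕ} (hk : 1 ≤ k) (p : ℝ) :
    iteratedDeriv k (fun q => A.mulVec (f q) + b) p = A.mulVec (iteratedDeriv k f p) := by
  obtain ⟨k, rfl⟩ : ∃ m, k = m + 1 := ⟨k - 1, by omega⟩
  rw [iteratedDeriv_succ']
  have h1 : deriv (fun q => A.mulVec (f q) + b) = deriv (fun q => A.mulVec (f q)) := by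
    funext q; exact deriv_add_const b
  rw [h1, deriv_mulVec A hf, iteratedDeriv_mulVec A k _ ((contDiff_infty_iff_deriv.mp hf).2)]
  rw [← iteratedDeriv_succ']

private lemma detD_affine {n : ℕ} (A : Matrix (Fin n) (Fin n) ℝ) (b : Fin n → ℝ)
    {x : ℝ → (Fin n → ℝ)} (hx : ContDiff ℝ ∞ x) (ords : Fin n → ℕ)
    (hords : ∀ j, 1 ≤ ords j) (p : ℝ) :
    detD n (fun q => A.mulVec (x q) + b) ords p = A.det * detD n x ords p := by
  unfold detD
  rw [← Matrix.det_mul]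
  congr 1
  ext i j
  rw [Matrix.mul_apply]
  simp only [Matrix.of_apply]
  rw [iteratedDeriv_affine A b hx (hords j) p]
  rfl

/-- Invariance of the fully affine arc length integrand under the full affine
group `GA(n) = GL(n) ⋉ ℝⁿ`. -/
theorem fullyAffineF_affine_invariant
    (n : ℕ) (hn : 2 ≤ n) (x : ℝ → (Fin n → ℝ)) (hx : ContDiff ℝ (⊤ : ℕ∞) x) (p : ℝ)
    (hxd : detD n x (fun j => n - (j : ℕ)) p ≠ 0)
    (A : Matrix (Fin n) (Fin n) ℝ) (hA : IsUnit A.det) (b : Fin n → ℝ) :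
    detD n (fun q => A.mulVec (x q) + b) (fun j => n - (j : ℕ)) p ≠ 0 ∧
    fullyAffineF n (fun q => A.mulVec (x q) + b) p = fullyAffineF n x p := by
  have hdA : A.det ≠ 0 := hA.ne_zero
  have hx' : ContDiff ℝ ∞ x := hx.of_le (by simp)
  have hsub : ∀ j : Fin n, 1 ≤ n - (j : ℕ) := fun j => by have := j.isLt; omega
  have h0 := detD_affine A b hx' (fun j => n - (j : ℕ)) hsub p
  have h1 := detD_affine A b hx' (fun j => if (j : ℕ) = 0 then n + 2 else n - (j : ℕ))
    (fun j => by have := hsub j; split_ifs <;> omega) p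
  have h2 := detD_affine A b hx' (fun j => if (j : ℕ) = 0 then n + 1 else n - (j : ℕ))
    (fun j => by have := hsub j; split_ifs <;> omega) p
  have h3 := detD_affine A b hx'
    (fun j => if (j : ℕ) = 0 then n + 1 else if (j : ℕ) = 1 then n else n - (j : ℕ))
    (fun j => by have := hsub j; split_ifs <;> omega) p
  refine ⟨by rw [h0]; exact mul_ne_zero hdA hxd, ?_⟩
  unfold fullyAffineF
  have hq : ∀ N D : ℝ, (A.det * N) / (A.det * D) = N / D := fun N D =>
    mul_div_mul_left _ _ hdA
  rw [h0, h1, h2, h3]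
  simp only [mul_div_assoc, hq]
end

section
/- Let L > 0, ε ∈ ℝ, and let φ, U : [0, L] → ℝ be smooth with U(0) = U(L) = U′(0) = U′(L) = U″(0) = U″(L) = U‴(0) = U‴(L) = 0. Then ∫₀ᴸ [27·U⁗ − 18·φ·U‴ + (21ε − 3φ² − 72φ′)·U″ + (2φ³ + 9φφ′ − 17εφ − 63φ″)·U′ + (4φ²φ′ + 6φφ″ + 12(φ′)² − 18εφ′ − 18φ‴)·U] dξ = −9·∫₀ᴸ U·(φ‴ + φ·φ″ + ((2φ² + 3φ′ + ε)/9)·φ′) dξ. -/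
private lemma smooth_iter {f : ℝ → ℝ} (hf : ContDiff ℝ (⊤ : ℕ∞) f) :
    ∀ n, ContDiff ℝ (⊤ : ℕ∞) (iteratedDeriv n f)
  | 0 => hf
  | (n + 1) => by
      rw [iteratedDeriv_succ]
      exact (contDiff_infty_iff_deriv.mp (smooth_iter hf n)).2

private lemma hasDerivAt_iter {f : ℝ → ℝ} (hf : ContDiff ℝ (⊤ : ℕ∞) f) (n : ℕ) (x : ℝ) :
    HasDerivAt (iteratedDeriv n f) (iteratedDeriv (n + 1) f x) x := by
  rw [iteratedDeriv_succ]
  exact ((contDiff_infty_iff_deriv.mp (smooth_iter hf n)).1 x).hasDerivAt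

/-- First variation of the fully affine length functional: the integration-by-parts
identity reducing the variation of the fully affine metric under a normal deformation
with speed `U` to the fully affine Euler–Lagrange expression. -/
theorem first_variation_integration_by_parts
    (L : ℝ) (hL : 0 < L) (ε : ℝ) (φ U : ℝ → ℝ)
    (hφ : ContDiff ℝ (⊤ : ℕ∞) φ) (hU : ContDiff ℝ (⊤ : ℕ∞) U)
    (hU0 : U 0 = 0) (hUL : U L = 0)
    (hU1 : deriv U 0 = 0) (hU1L : deriv U L = 0)
    (hU2 : iteratedDeriv 2 U 0 = 0) (hU2L : iteratedDeriv 2 U L = 0)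
    (hU3 : iteratedDeriv 3 U 0 = 0) (hU3L : iteratedDeriv 3 U L = 0) :
    (∫ ξ in (0:ℝ)..L,
      (27 * iteratedDeriv 4 U ξ - 18 * φ ξ * iteratedDeriv 3 U ξ
        + (21 * ε - 3 * (φ ξ) ^ 2 - 72 * deriv φ ξ) * iteratedDeriv 2 U ξ
        + (2 * (φ ξ) ^ 3 + 9 * φ ξ * deriv φ ξ - 17 * ε * φ ξ
            - 63 * iteratedDeriv 2 φ ξ) * deriv U ξ
        + (4 * (φ ξ) ^ 2 * deriv φ ξ + 6 * φ ξ * iteratedDeriv 2 φ ξ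
            + 12 * (deriv φ ξ) ^ 2 - 18 * ε * deriv φ ξ
            - 18 * iteratedDeriv 3 φ ξ) * U ξ))
    = -9 * ∫ ξ in (0:ℝ)..L,
        U ξ * (iteratedDeriv 3 φ ξ + φ ξ * iteratedDeriv 2 φ ξ
          + ((2 * (φ ξ) ^ 2 + 3 * deriv φ ξ + ε) / 9) * deriv φ ξ) := by
  have hφ' : ContDiff ℝ (⊤ : ℕ∞) φ := hφ.of_le (by simp)
  have hU' : ContDiff ℝ (⊤ : ℕ∞) U := hU.of_le (by simp)
  -- continuity of all iterated derivatives
  have cφ : ∀ n, Continuous (iteratedDeriv n φ) := fun n => (smooth_iter hφ' n).continuous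
  have cU : ∀ n, Continuous (iteratedDeriv n U) := fun n => (smooth_iter hU' n).continuous
  have cφ1 : Continuous (deriv φ) := by simpa [iteratedDeriv_one] using cφ 1
  have cU1 : Continuous (deriv U) := by simpa [iteratedDeriv_one] using cU 1
  have cφ0 : Continuous φ := hφ'.continuous
  have cU0 : Continuous U := hU'.continuous
  -- the antiderivative G and its derivative g
  set g : ℝ → ℝ := fun ξ =>
    27 * iteratedDeriv 4 U ξ - 18 * φ ξ * iteratedDeriv 3 U ξ
      + (21 * ε - 3 * (φ ξ) ^ 2 - 72 * deriv φ ξ) * iteratedDeriv 2 U ξ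
      + (2 * (φ ξ) ^ 3 + 9 * φ ξ * deriv φ ξ - 17 * ε * φ ξ
          - 63 * iteratedDeriv 2 φ ξ) * deriv U ξ
      + (6 * (φ ξ) ^ 2 * deriv φ ξ + 15 * φ ξ * iteratedDeriv 2 φ ξ
          + 15 * (deriv φ ξ) ^ 2 - 17 * ε * deriv φ ξ
          - 9 * iteratedDeriv 3 φ ξ) * U ξ with hg_def
  have key : ∀ x ∈ Set.uIcc (0:ℝ) L,
      HasDerivAt (fun ξ =>
        27 * iteratedDeriv 3 U ξ - 18 * φ ξ * iteratedDeriv 2 U ξ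
          + (21 * ε - 3 * (φ ξ) ^ 2 - 54 * deriv φ ξ) * deriv U ξ
          + (2 * (φ ξ) ^ 3 + 15 * φ ξ * deriv φ ξ - 17 * ε * φ ξ
              - 9 * iteratedDeriv 2 φ ξ) * U ξ) (g x) x := by
    intro x _
    have pU0 : HasDerivAt U (deriv U x) x := by
      simpa [iteratedDeriv_one] using hasDerivAt_iter hU' 0 x
    have pU1 : HasDerivAt (deriv U) (iteratedDeriv 2 U x) x := by
      simpa [iteratedDeriv_one] using hasDerivAt_iter hU' 1 x
    have pU2 : HasDerivAt (iteratedDeriv 2 U) (iteratedDeriv 3 U x) x :=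
      hasDerivAt_iter hU' 2 x
    have pU3 : HasDerivAt (iteratedDeriv 3 U) (iteratedDeriv 4 U x) x :=
      hasDerivAt_iter hU' 3 x
    have pφ0 : HasDerivAt φ (deriv φ x) x := by
      simpa [iteratedDeriv_one] using hasDerivAt_iter hφ' 0 x
    have pφ1 : HasDerivAt (deriv φ) (iteratedDeriv 2 φ x) x := by
      simpa [iteratedDeriv_one] using hasDerivAt_iter hφ' 1 x
    have pφ2 : HasDerivAt (iteratedDeriv 2 φ) (iteratedDeriv 3 φ x) x :=
      hasDerivAt_iter hφ' 2 x
    have h1 := (pU3.const_mul (27:ℝ)).sub ((pφ0.const_mul (18:ℝ)).mul pU2)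
    have h2 := (((hasDerivAt_const x (21*ε)).sub ((pφ0.pow 2).const_mul (3:ℝ))).sub
      (pφ1.const_mul (54:ℝ))).mul pU1
    have h3 := (((((pφ0.pow 3).const_mul (2:ℝ)).add
      ((pφ0.const_mul (15:ℝ)).mul pφ1)).sub
      (pφ0.const_mul (17*ε))).sub (pφ2.const_mul (9:ℝ))).mul pU0
    have H := (h1.add h2).add h3
    refine H.congr_deriv ?_
    simp only [g, Pi.sub_apply, Pi.add_apply, Pi.mul_apply, Pi.pow_apply]
    push_cast
    ring
  have cg : Continuous g := by rw [hg_def]; fun_prop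
  have hint_g : IntervalIntegrable g MeasureTheory.volume 0 L := cg.intervalIntegrable 0 L
  have h0 : (∫ ξ in (0:ℝ)..L, g ξ) = 0 := by
    rw [intervalIntegral.integral_eq_sub_of_hasDerivAt key hint_g]
    simp [hU0, hUL, hU1, hU1L, hU2, hU2L, hU3, hU3L]
  have hint_h : IntervalIntegrable (fun ξ => 9 * (U ξ * (iteratedDeriv 3 φ ξ
      + φ ξ * iteratedDeriv 2 φ ξ
      + ((2 * (φ ξ) ^ 2 + 3 * deriv φ ξ + ε) / 9) * deriv φ ξ)))
      MeasureTheory.volume 0 L := by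
    apply Continuous.intervalIntegrable; fun_prop
  calc (∫ ξ in (0:ℝ)..L,
      (27 * iteratedDeriv 4 U ξ - 18 * φ ξ * iteratedDeriv 3 U ξ
        + (21 * ε - 3 * (φ ξ) ^ 2 - 72 * deriv φ ξ) * iteratedDeriv 2 U ξ
        + (2 * (φ ξ) ^ 3 + 9 * φ ξ * deriv φ ξ - 17 * ε * φ ξ
            - 63 * iteratedDeriv 2 φ ξ) * deriv U ξ
        + (4 * (φ ξ) ^ 2 * deriv φ ξ + 6 * φ ξ * iteratedDeriv 2 φ ξ
            + 12 * (deriv φ ξ) ^ 2 - 18 * ε * deriv φ ξ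
            - 18 * iteratedDeriv 3 φ ξ) * U ξ))
      = ∫ ξ in (0:ℝ)..L, (g ξ - 9 * (U ξ * (iteratedDeriv 3 φ ξ
          + φ ξ * iteratedDeriv 2 φ ξ
          + ((2 * (φ ξ) ^ 2 + 3 * deriv φ ξ + ε) / 9) * deriv φ ξ))) := by
        apply intervalIntegral.integral_congr
        intro ξ _
        simp only [hg_def]
        ring
    _ = (∫ ξ in (0:ℝ)..L, g ξ) - ∫ ξ in (0:ℝ)..L, 9 * (U ξ * (iteratedDeriv 3 φ ξ
          + φ ξ * iteratedDeriv 2 φ ξ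
          + ((2 * (φ ξ) ^ 2 + 3 * deriv φ ξ + ε) / 9) * deriv φ ξ)) :=
        intervalIntegral.integral_sub hint_g hint_h
    _ = -9 * ∫ ξ in (0:ℝ)..L,
        U ξ * (iteratedDeriv 3 φ ξ + φ ξ * iteratedDeriv 2 φ ξ
          + ((2 * (φ ξ) ^ 2 + 3 * deriv φ ξ + ε) / 9) * deriv φ ξ) := by
        rw [h0, intervalIntegral.integral_const_mul]
        ring
end

section
/- Let I ⊂ ℝ be an open interval and let φ : I → ℝ be twice continuously differentiable, not constant, and satisfy φ″(ξ) = (2/3)·φ(ξ)·φ′(ξ) for all ξ ∈ I. Then there exist constants c ∈ ℝ and A ≠ 0 such that on all of I one of the following holds: φ(ξ) = −3/(ξ − c), or φ(ξ) = A·tan((A/3)(ξ − c)), or φ(ξ) = −A·tanh((A/3)(ξ − c)), or φ(ξ) = −A·coth((A/3)(ξ − c)). -/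
/-!
Since `(φ' - φ² / 3)' = φ'' - (2/3) φ φ' = 0`, the equation integrates once to the Riccati
equation `3 φ' = φ² + m`. Each real root `b` of `x² + m` is a constant solution, which a
non-constant `φ` cannot touch by uniqueness for the (locally Lipschitz) Riccati equation.
The sign of `m` then gives a separable first integral: for `m = A² > 0` the function
`arctan (φ / A) - A ξ / 3`, for `m = 0` the function `ξ + 3 / φ`, and for `m = -A² < 0` the
function `(φ + A) / (φ - A) · exp (2 A ξ / 3)` is constant; in the last case the sign of that
constant decides between `tanh` (`|φ| < A`) and `coth` (`|φ| > A`).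
-/

open Set Filter Topology Real

theorem IsPreconnected.eqOn_of_hasDerivAt_of_locallyLipschitz {E : Type*}
    [NormedAddCommGroup E] [NormedSpace ℝ E] {v : E → E} (hv : LocallyLipschitz v)
    {I : Set ℝ} (hI : IsOpen I) (hIc : IsPreconnected I) {f g : ℝ → E}
    (hf : ∀ t ∈ I, HasDerivAt f (v (f t)) t) (hg : ∀ t ∈ I, HasDerivAt g (v (g t)) t)
    {t₀ : ℝ} (ht₀ : t₀ ∈ I) (heq : f t₀ = g t₀) : EqOn f g I := by
  have local_eq : ∀ t ∈ I, f t = g t → f =ᶠ[𝓝 t] g := by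
    intro t ht hfg
    obtain ⟨K, s, hs, hK⟩ := hv (f t)
    refine ODE_solution_unique_of_eventually (v := fun _ ↦ v) (s := fun _ ↦ s)
      (Eventually.of_forall fun _ ↦ hK) ?_ ?_ hfg
    · filter_upwards [hI.mem_nhds ht, (hf t ht).continuousAt.preimage_mem_nhds hs]
        with t' ht' hfs using ⟨hf t' ht', hfs⟩
    · filter_upwards [hI.mem_nhds ht, (hg t ht).continuousAt.preimage_mem_nhds (hfg ▸ hs)]
        with t' ht' hgs using ⟨hg t' ht', hgs⟩
  have hsub : I ⊆ {t | f =ᶠ[𝓝 t] g} := by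
    refine hIc.subset_of_closure_inter_subset isOpen_setOfPred_eventually_nhds
      ⟨t₀, ht₀, local_eq t₀ ht₀ heq⟩ ?_
    rintro t ⟨htu, ht⟩
    refine local_eq t ht (tendsto_nhds_unique_of_frequently_eq (hf t ht).continuousAt
      (hg t ht).continuousAt ?_)
    exact (mem_closure_iff_frequently.1 htu).mono fun _ h ↦ h.eq_of_nhds
  exact fun t ht ↦ (hsub ht).eq_of_nhds

theorem IsOpen.exists_const_of_hasDerivAt_zero {I : Set ℝ} (hI : IsOpen I)
    (hIc : IsPreconnected I) {f : ℝ → ℝ} (hf : ∀ x ∈ I, HasDerivAt f 0 x) :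
    ∃ a, ∀ x ∈ I, f x = a :=
  hI.exists_is_const_of_deriv_eq_zero hIc
    (fun x hx ↦ (hf x hx).differentiableAt.differentiableWithinAt) fun x hx ↦ (hf x hx).deriv

theorem eq_neg_mul_tanh_of_mul_exp_eq {x A s : ℝ}
    (h : (x + A) * exp s = -((x - A) * exp (-s))) : x = -A * tanh s := by
  rw [← cosh_add_sinh, ← cosh_sub_sinh] at h
  rw [tanh_eq_sinh_div_cosh]
  field_simp [(cosh_pos s).ne']
  linear_combination h / 2

theorem eq_neg_mul_coth_of_mul_exp_eq {x A s : ℝ} (hA : A ≠ 0)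
    (h : (x + A) * exp s = (x - A) * exp (-s)) : x = -A * (cosh s / sinh s) := by
  rw [← cosh_add_sinh, ← cosh_sub_sinh] at h
  have hsinh : sinh s ≠ 0 := by
    intro hs
    rw [hs] at h
    exact hA (by nlinarith [cosh_pos s])
  field_simp
  linear_combination h / 2

section Riccati

variable {I : Set ℝ} {φ : ℝ → ℝ}

theorem exists_hasDerivAt_sq_add_div_three_of_iteratedDeriv_two (hI : IsOpen I)
    (hIc : IsPreconnected I) (hφ : ContDiffOn ℝ 2 φ I)
    (hode : ∀ ξ ∈ I, iteratedDeriv 2 φ ξ = 2 / 3 * φ ξ * deriv φ ξ) :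
    ∃ m, ∀ ξ ∈ I, HasDerivAt φ ((φ ξ ^ 2 + m) / 3) ξ := by
  have hφ' : ∀ ξ ∈ I, HasDerivAt φ (deriv φ ξ) ξ := fun ξ hξ ↦
    ((hφ.differentiableOn (by norm_num)).differentiableAt (hI.mem_nhds hξ)).hasDerivAt
  have hφ'' : ∀ ξ ∈ I, HasDerivAt (deriv φ) (iteratedDeriv 2 φ ξ) ξ := fun ξ hξ ↦ by
    rw [iteratedDeriv_succ, iteratedDeriv_one]
    have hφ₁ : ContDiffOn ℝ 1 (deriv φ) I := hφ.deriv_of_isOpen hI (by norm_num)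
    exact ((hφ₁.differentiableOn one_ne_zero).differentiableAt (hI.mem_nhds hξ)).hasDerivAt
  obtain ⟨m, hm⟩ := hI.exists_const_of_hasDerivAt_zero hIc
    (f := fun ξ ↦ 3 * deriv φ ξ - φ ξ ^ 2) fun ξ hξ ↦ by
      refine (((hφ'' ξ hξ).const_mul 3).sub ((hφ' ξ hξ).pow 2)).congr_deriv ?_
      rw [hode ξ hξ]; push_cast; ring
  refine ⟨m, fun ξ hξ ↦ ?_⟩
  convert hφ' ξ hξ using 1
  linarith [hm ξ hξ]

theorem ne_of_sq_add_eq_zero_of_hasDerivAt (hI : IsOpen I) (hIc : IsPreconnected I)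
    {m b : ℝ} (hb : b ^ 2 + m = 0) (hφ : ∀ ξ ∈ I, HasDerivAt φ ((φ ξ ^ 2 + m) / 3) ξ)
    (hnc : ∃ ξ ∈ I, ∃ η ∈ I, φ ξ ≠ φ η) : ∀ ξ ∈ I, φ ξ ≠ b := by
  intro ξ₀ hξ₀ hφb
  have hv : LocallyLipschitz fun x : ℝ ↦ (x ^ 2 + m) / 3 :=
    ContDiff.locallyLipschitz (by fun_prop)
  have hconst := hIc.eqOn_of_hasDerivAt_of_locallyLipschitz hv hI hφ (g := fun _ ↦ b)
    (fun _ _ ↦ by simpa [hb] using hasDerivAt_const _ b) hξ₀ hφb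
  obtain ⟨ξ, hξ, η, hη, hne⟩ := hnc
  exact hne ((hconst hξ).trans (hconst hη).symm)

theorem exists_eq_neg_three_div_of_hasDerivAt (hI : IsOpen I) (hIc : IsPreconnected I)
    (hφ0 : ∀ ξ ∈ I, φ ξ ≠ 0) (hφ : ∀ ξ ∈ I, HasDerivAt φ (φ ξ ^ 2 / 3) ξ) :
    ∃ c, ∀ ξ ∈ I, φ ξ = -3 / (ξ - c) := by
  obtain ⟨c, hc⟩ := hI.exists_const_of_hasDerivAt_zero hIc
    (f := fun ξ ↦ ξ + 3 / φ ξ) fun ξ hξ ↦ by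
      refine ((hasDerivAt_id ξ).add
        ((hasDerivAt_const ξ 3).div (hφ ξ hξ) (hφ0 ξ hξ))).congr_deriv ?_
      field_simp [hφ0 ξ hξ]
      ring
  refine ⟨c, fun ξ hξ ↦ ?_⟩
  rw [← hc ξ hξ]
  field_simp [hφ0 ξ hξ]
  ring

theorem exists_eq_mul_tan_of_hasDerivAt (hI : IsOpen I) (hIc : IsPreconnected I) {A : ℝ}
    (hA : A ≠ 0) (hφ : ∀ ξ ∈ I, HasDerivAt φ ((φ ξ ^ 2 + A ^ 2) / 3) ξ) :
    ∃ c, ∀ ξ ∈ I, φ ξ = A * tan (A / 3 * (ξ - c)) := by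
  obtain ⟨a, ha⟩ := hI.exists_const_of_hasDerivAt_zero hIc
    (f := fun ξ ↦ arctan (φ ξ / A) - A / 3 * ξ) fun ξ hξ ↦ by
      refine (((hasDerivAt_arctan _).comp ξ ((hφ ξ hξ).div_const A)).sub
        ((hasDerivAt_id ξ).const_mul (A / 3))).congr_deriv ?_
      have : A ^ 2 + φ ξ ^ 2 ≠ 0 := by positivity
      field_simp
      ring
  refine ⟨-3 * a / A, fun ξ hξ ↦ ?_⟩
  have harctan : A / 3 * (ξ - -3 * a / A) = arctan (φ ξ / A) := by
    field_simp
    linarith [ha ξ hξ]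
  rw [harctan, tan_arctan]
  field_simp

theorem exists_eq_neg_mul_tanh_or_coth_of_hasDerivAt (hI : IsOpen I) (hIc : IsPreconnected I)
    {A : ℝ} (hA : A ≠ 0) (hφA : ∀ ξ ∈ I, φ ξ ≠ A) (hφnA : ∀ ξ ∈ I, φ ξ ≠ -A)
    (hφ : ∀ ξ ∈ I, HasDerivAt φ ((φ ξ ^ 2 - A ^ 2) / 3) ξ) :
    ∃ c, (∀ ξ ∈ I, φ ξ = -A * tanh (A / 3 * (ξ - c))) ∨
      (∀ ξ ∈ I, φ ξ = -A * (cosh (A / 3 * (ξ - c)) / sinh (A / 3 * (ξ - c)))) := by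
  obtain ⟨K, hK⟩ := hI.exists_const_of_hasDerivAt_zero hIc
    (f := fun ξ ↦ (φ ξ + A) / (φ ξ - A) * exp (2 * A / 3 * ξ)) fun ξ hξ ↦ by
      have hA' : φ ξ - A ≠ 0 := sub_ne_zero.2 (hφA ξ hξ)
      refine ((((hφ ξ hξ).add_const A).div ((hφ ξ hξ).sub_const A) hA').mul
        (((hasDerivAt_id ξ).const_mul (2 * A / 3)).exp)).congr_deriv ?_
      simp only [Pi.div_apply, id]
      field_simp
      ring
  have hrel : ∀ c, ∀ ξ ∈ I, (φ ξ + A) * exp (A / 3 * (ξ - c)) =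
      K * exp (-(2 * A / 3 * c)) * ((φ ξ - A) * exp (-(A / 3 * (ξ - c)))) := by
    intro c ξ hξ
    have hA' : φ ξ - A ≠ 0 := sub_ne_zero.2 (hφA ξ hξ)
    rw [← hK ξ hξ, show exp (A / 3 * (ξ - c)) = exp (2 * A / 3 * ξ) * exp (-(2 * A / 3 * c)) *
      exp (-(A / 3 * (ξ - c))) by rw [← exp_add, ← exp_add]; ring_nf]
    field_simp
  -- This choice of `c` normalizes `K * exp (-(2 * A / 3 * c))` to the sign of `K`.
  refine ⟨3 / (2 * A) * log |K|, ?_⟩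
  have hscale : K * exp (-(2 * A / 3 * (3 / (2 * A) * log |K|))) = K / |K| := by
    rw [show 2 * A / 3 * (3 / (2 * A) * log |K|) = log |K| by field_simp, exp_neg]
    rcases eq_or_ne K 0 with rfl | hK0
    · simp
    · rw [exp_log (abs_pos.2 hK0), div_eq_mul_inv]
  rcases lt_trichotomy K 0 with hK0 | rfl | hK0
  · refine Or.inl fun ξ hξ ↦ eq_neg_mul_tanh_of_mul_exp_eq ?_
    rw [hrel _ ξ hξ, hscale, abs_of_neg hK0, div_neg, div_self hK0.ne]
    ring
  · refine Or.inl fun ξ hξ ↦ absurd ?_ (hφnA ξ hξ)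
    have h0 := hK ξ hξ
    rw [mul_eq_zero, div_eq_zero_iff, sub_eq_zero, or_iff_left (hφA ξ hξ),
      or_iff_left (exp_pos _).ne'] at h0
    exact eq_neg_of_add_eq_zero_left h0
  · refine Or.inr fun ξ hξ ↦ eq_neg_mul_coth_of_mul_exp_eq hA ?_
    rw [hrel _ ξ hξ, hscale, abs_of_pos hK0, div_self hK0.ne', one_mul]

end Riccati

/-- Classification of the non-constant solutions of `φ″ = (2/3)·φ·φ′` on an open
interval: they are of rational, tangent, hyperbolic-tangent or
hyperbolic-cotangent type (the ODE underlying the classification of solitons of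
the fully affine heat flow, Theorem 1.2). -/
theorem soliton_curvature_classification
    (I : Set ℝ) (hIopen : IsOpen I) (hIconv : Convex ℝ I)
    (φ : ℝ → ℝ) (hφ : ContDiffOn ℝ 2 φ I)
    (hnc : ∃ ξ ∈ I, ∃ η ∈ I, φ ξ ≠ φ η)
    (hode : ∀ ξ ∈ I, iteratedDeriv 2 φ ξ = 2 / 3 * φ ξ * deriv φ ξ) :
    ∃ c A : ℝ, A ≠ 0 ∧
      ((∀ ξ ∈ I, φ ξ = -3 / (ξ - c)) ∨
       (∀ ξ ∈ I, φ ξ = A * Real.tan (A / 3 * (ξ - c))) ∨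
       (∀ ξ ∈ I, φ ξ = -A * Real.tanh (A / 3 * (ξ - c))) ∨
       (∀ ξ ∈ I, φ ξ = -A *
          (Real.cosh (A / 3 * (ξ - c)) / Real.sinh (A / 3 * (ξ - c))))) := by
  have hIc := hIconv.isPreconnected
  obtain ⟨m, hm⟩ := exists_hasDerivAt_sq_add_div_three_of_iteratedDeriv_two hIopen hIc hφ hode
  have hroot {b : ℝ} (hb : b ^ 2 + m = 0) : ∀ ξ ∈ I, φ ξ ≠ b :=
    ne_of_sq_add_eq_zero_of_hasDerivAt hIopen hIc hb hm hnc
  rcases lt_trichotomy m 0 with hneg | rfl | hpos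
  · obtain ⟨A, hA, rfl⟩ : ∃ A, 0 < A ∧ m = -A ^ 2 :=
      ⟨√(-m), sqrt_pos.2 (neg_pos.2 hneg), by rw [sq_sqrt (neg_nonneg.2 hneg.le), neg_neg]⟩
    obtain ⟨c, h | h⟩ := exists_eq_neg_mul_tanh_or_coth_of_hasDerivAt hIopen hIc hA.ne'
      (hroot (by ring)) (hroot (by ring)) (by simpa only [← sub_eq_add_neg] using hm)
    · exact ⟨c, A, hA.ne', Or.inr (Or.inr (Or.inl h))⟩
    · exact ⟨c, A, hA.ne', Or.inr (Or.inr (Or.inr h))⟩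
  · obtain ⟨c, h⟩ := exists_eq_neg_three_div_of_hasDerivAt hIopen hIc
      (hroot (by ring)) (by simpa only [add_zero] using hm)
    exact ⟨c, 1, one_ne_zero, Or.inl h⟩
  · obtain ⟨A, hA, rfl⟩ : ∃ A, 0 < A ∧ m = A ^ 2 := ⟨√m, sqrt_pos.2 hpos, (sq_sqrt hpos.le).symm⟩
    obtain ⟨c, h⟩ := exists_eq_mul_tan_of_hasDerivAt hIopen hIc hA.ne' hm
    exact ⟨c, A, hA.ne', Or.inr (Or.inl h)⟩
end

section
/- Let L > 0 and let κ : ℝ → ℝ be a smooth, L-periodic, strictly positive function. Then ∫₀ᴸ (κ^{4/3} − (5/9)·κ^{−8/3}·(κ′)² + (1/3)·κ^{−5/3}·κ″) ds = ∫₀ᴸ κ^{4/3} ds, and in particular this common value is strictly positive. -/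
/-- Lemma 6.1 (key computation): for a smooth positive `L`-periodic function `κ`,
`∫₀ᴸ (κ^{4/3} − (5/9)κ^{−8/3}(κ′)² + (1/3)κ^{−5/3}κ″) ds = ∫₀ᴸ κ^{4/3} ds > 0`. -/
theorem total_equiaffine_curvature_positive
    (L : ℝ) (hL : 0 < L) (κ : ℝ → ℝ) (hκ : ContDiff ℝ (⊤ : ℕ∞) κ)
    (hper : ∀ s, κ (s + L) = κ s) (hpos : ∀ s, 0 < κ s) :
    (∫ s in (0:ℝ)..L,
        (κ s ^ ((4:ℝ)/3) - 5/9 * κ s ^ (-(8:ℝ)/3) * (deriv κ s) ^ 2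
          + 1/3 * κ s ^ (-(5:ℝ)/3) * iteratedDeriv 2 κ s))
      = (∫ s in (0:ℝ)..L, κ s ^ ((4:ℝ)/3)) ∧
    0 < ∫ s in (0:ℝ)..L, κ s ^ ((4:ℝ)/3) := by
  have hne : ∀ s, κ s ≠ 0 := fun s => (hpos s).ne'
  have hκ0 : ContDiff ℝ (⊤ : ℕ∞) κ := hκ.of_le (by simp)
  have hκ' : ContDiff ℝ (⊤ : ℕ∞) (deriv κ) := (contDiff_infty_iff_deriv.mp hκ0).2
  have hκ'' : ContDiff ℝ (⊤ : ℕ∞) (deriv (deriv κ)) := (contDiff_infty_iff_deriv.mp hκ').2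
  have hcκ : Continuous κ := hκ.continuous
  have hcκ' : Continuous (deriv κ) := hκ'.continuous
  have hcκ'' : Continuous (deriv (deriv κ)) := hκ''.continuous
  have hrpow : ∀ (p : ℝ), Continuous (fun s => κ s ^ p) := fun p =>
    hcκ.rpow_const (fun s => Or.inl (hne s))
  -- g = (1/3) κ^{-5/3} κ'
  set g : ℝ → ℝ := fun s => 1/3 * κ s ^ (-(5:ℝ)/3) * deriv κ s with hg
  set F : ℝ → ℝ := fun s =>
    -(5/9) * κ s ^ (-(8:ℝ)/3) * (deriv κ s) ^ 2
      + 1/3 * κ s ^ (-(5:ℝ)/3) * iteratedDeriv 2 κ s with hF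
  have hderiv : ∀ s, HasDerivAt g (F s) s := by
    intro s
    have h1 : HasDerivAt κ (deriv κ s) s :=
      (hκ.differentiable (by simp) s).hasDerivAt
    have h2 : HasDerivAt (deriv κ) (deriv (deriv κ) s) s :=
      (hκ'.differentiable (by simp) s).hasDerivAt
    have h3 : HasDerivAt (fun t => κ t ^ (-(5:ℝ)/3))
        (deriv κ s * (-(5:ℝ)/3) * κ s ^ (-(5:ℝ)/3 - 1)) s :=
      h1.rpow_const (Or.inl (hne s))
    have h4 := ((h3.const_mul (1/3 : ℝ)).mul h2)
    convert h4 using 1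
    case e'_4 => rfl
    case e'_5 => rfl
    case e'_8 => rfl
    have hexp : (-(5:ℝ)/3 - 1) = -(8:ℝ)/3 := by norm_num
    rw [hF, iteratedDeriv_succ, iteratedDeriv_one, hexp]
    ring
  have hFcont : Continuous F := by
    rw [hF]
    have : (fun s => iteratedDeriv 2 κ s) = deriv (deriv κ) := by
      funext s; rw [iteratedDeriv_succ, iteratedDeriv_one]
    refine Continuous.add ?_ ?_
    · exact (continuous_const.mul (hrpow _)).mul (hcκ'.pow 2)
    · have h2 : Continuous (fun s => iteratedDeriv 2 κ s) := this ▸ hcκ''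
      exact (continuous_const.mul (hrpow _)).mul h2
  have hFint : IntervalIntegrable F MeasureTheory.volume 0 L :=
    hFcont.intervalIntegrable _ _
  have hκ43int : IntervalIntegrable (fun s => κ s ^ ((4:ℝ)/3))
      MeasureTheory.volume 0 L := (hrpow _).intervalIntegrable _ _
  -- ∫ F = g L - g 0 = 0
  have hper' : deriv κ L = deriv κ 0 := by
    have : (fun t => κ (t + L)) = κ := funext hper
    calc deriv κ L = deriv (fun t => κ (t + L)) 0 := by
          rw [deriv_comp_add_const]; norm_num
      _ = deriv κ 0 := by rw [this]
  have hFzero : (∫ s in (0:ℝ)..L, F s) = 0 := by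
    rw [intervalIntegral.integral_eq_sub_of_hasDerivAt
      (fun s _ => hderiv s) hFint]
    have : g L = g 0 := by
      simp only [hg]
      rw [hper', show κ L = κ 0 from by rw [← hper 0]; norm_num]
    rw [this, sub_self]
  constructor
  · have heq : ∀ s, κ s ^ ((4:ℝ)/3) - 5/9 * κ s ^ (-(8:ℝ)/3) * (deriv κ s) ^ 2
        + 1/3 * κ s ^ (-(5:ℝ)/3) * iteratedDeriv 2 κ s
        = κ s ^ ((4:ℝ)/3) + F s := by intro s; rw [hF]; ring
    calc (∫ s in (0:ℝ)..L,
        (κ s ^ ((4:ℝ)/3) - 5/9 * κ s ^ (-(8:ℝ)/3) * (deriv κ s) ^ 2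
          + 1/3 * κ s ^ (-(5:ℝ)/3) * iteratedDeriv 2 κ s))
        = ∫ s in (0:ℝ)..L, (κ s ^ ((4:ℝ)/3) + F s) := by
          simp_rw [heq]
      _ = (∫ s in (0:ℝ)..L, κ s ^ ((4:ℝ)/3)) + ∫ s in (0:ℝ)..L, F s :=
          intervalIntegral.integral_add hκ43int hFint
      _ = ∫ s in (0:ℝ)..L, κ s ^ ((4:ℝ)/3) := by rw [hFzero, add_zero]
  · refine intervalIntegral.intervalIntegral_pos_of_pos_on hκ43int ?_ hL
    intro x _
    exact Real.rpow_pos_of_pos (hpos x) _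
end

section
/- Let a < b, let f : [a, b] → ℝ be smooth, and let U : [a, b] → ℝ be smooth with U, U′, U″, U‴ all vanishing at both endpoints a and b. Then ∫ₐᵇ f·U·U⁽⁶⁾ dξ = ∫ₐᵇ (−f·(U‴)² + (9/2)·f″·(U″)² − 3·f⁗·(U′)² + (1/2)·f⁽⁶⁾·U²) dξ. -/
private lemma hasDerivAt_iteratedDeriv {g : ℝ → ℝ} (hg : ContDiff ℝ (⊤ : ℕ∞) g) (n : ℕ) (x : ℝ) :
    HasDerivAt (iteratedDeriv n g) (iteratedDeriv (n + 1) g x) x := by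
  have h := (hg.differentiable_iteratedDeriv n (by
    exact_mod_cast ENat.coe_lt_top n)) x
  simpa [iteratedDeriv_succ] using h.hasDerivAt

/-- Second variation reduction formula: `∫ f·U·U⁽⁶⁾ = ∫ (−f(U‴)² + (9/2)f″(U″)²
− 3f⁗(U′)² + (1/2)f⁽⁶⁾U²)` for `U` with `U, U′, U″, U‴` vanishing at the endpoints. -/
theorem second_variation_reduction_six
    (a b : ℝ) (hab : a < b) (f U : ℝ → ℝ)
    (hf : ContDiff ℝ (⊤ : ℕ∞) f) (hU : ContDiff ℝ (⊤ : ℕ∞) U)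
    (hUa : U a = 0) (hUb : U b = 0)
    (hU1a : deriv U a = 0) (hU1b : deriv U b = 0)
    (hU2a : iteratedDeriv 2 U a = 0) (hU2b : iteratedDeriv 2 U b = 0)
    (hU3a : iteratedDeriv 3 U a = 0) (hU3b : iteratedDeriv 3 U b = 0) :
    (∫ ξ in a..b, f ξ * U ξ * iteratedDeriv 6 U ξ)
      = ∫ ξ in a..b,
          (-(f ξ) * (iteratedDeriv 3 U ξ) ^ 2
            + 9/2 * iteratedDeriv 2 f ξ * (iteratedDeriv 2 U ξ) ^ 2
            - 3 * iteratedDeriv 4 f ξ * (deriv U ξ) ^ 2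
            + 1/2 * iteratedDeriv 6 f ξ * (U ξ) ^ 2) := by
  have hf' := fun n x => hasDerivAt_iteratedDeriv hf n x
  have hU' := fun n x => hasDerivAt_iteratedDeriv hU n x
  have hGderiv : ∀ x : ℝ, HasDerivAt (fun x =>
      iteratedDeriv 0 f x * iteratedDeriv 0 U x * iteratedDeriv 5 U x
      - iteratedDeriv 0 f x * iteratedDeriv 1 U x * iteratedDeriv 4 U x
      + iteratedDeriv 0 f x * iteratedDeriv 2 U x * iteratedDeriv 3 U x
      - iteratedDeriv 1 f x * iteratedDeriv 0 U x * iteratedDeriv 4 U x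
      + 2 * (iteratedDeriv 1 f x * iteratedDeriv 1 U x * iteratedDeriv 3 U x)
      - 3/2 * (iteratedDeriv 1 f x * iteratedDeriv 2 U x ^ 2)
      + iteratedDeriv 2 f x * iteratedDeriv 0 U x * iteratedDeriv 3 U x
      - 3 * (iteratedDeriv 2 f x * iteratedDeriv 1 U x * iteratedDeriv 2 U x)
      - iteratedDeriv 3 f x * iteratedDeriv 0 U x * iteratedDeriv 2 U x
      + 2 * (iteratedDeriv 3 f x * iteratedDeriv 1 U x ^ 2)
      + iteratedDeriv 4 f x * iteratedDeriv 0 U x * iteratedDeriv 1 U x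
      - 1/2 * (iteratedDeriv 5 f x * iteratedDeriv 0 U x ^ 2))
      (f x * U x * iteratedDeriv 6 U x
        - (-(f x) * (iteratedDeriv 3 U x) ^ 2
            + 9/2 * iteratedDeriv 2 f x * (iteratedDeriv 2 U x) ^ 2
            - 3 * iteratedDeriv 4 f x * (deriv U x) ^ 2
            + 1/2 * iteratedDeriv 6 f x * (U x) ^ 2)) x := by
    intro x
    have h := ((((((((((((((hf' 0 x).mul (hU' 0 x)).mul (hU' 5 x)).sub
      (((hf' 0 x).mul (hU' 1 x)).mul (hU' 4 x))).add
      (((hf' 0 x).mul (hU' 2 x)).mul (hU' 3 x))).sub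
      (((hf' 1 x).mul (hU' 0 x)).mul (hU' 4 x))).add
      ((((hf' 1 x).mul (hU' 1 x)).mul (hU' 3 x)).const_mul 2)).sub
      (((hf' 1 x).mul ((hU' 2 x).pow 2)).const_mul (3/2))).add
      (((hf' 2 x).mul (hU' 0 x)).mul (hU' 3 x))).sub
      ((((hf' 2 x).mul (hU' 1 x)).mul (hU' 2 x)).const_mul 3)).sub
      (((hf' 3 x).mul (hU' 0 x)).mul (hU' 2 x))).add
      (((hf' 3 x).mul ((hU' 1 x).pow 2)).const_mul 2)).add
      (((hf' 4 x).mul (hU' 0 x)).mul (hU' 1 x))).sub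
      (((hf' 5 x).mul ((hU' 0 x).pow 2)).const_mul (1/2)))
    convert h using 1
    · rfl
    · rfl
    · rfl
    simp only [iteratedDeriv_zero, iteratedDeriv_one]
    norm_num
    ring
  have hcont : ∀ n, Continuous (iteratedDeriv n U) := fun n =>
    hU.continuous_iteratedDeriv n (by exact_mod_cast le_top)
  have hcontf : ∀ n, Continuous (iteratedDeriv n f) := fun n =>
    hf.continuous_iteratedDeriv n (by exact_mod_cast le_top)
  have hcf0 : Continuous f := by simpa using hcontf 0
  have hcU0 : Continuous U := by simpa using hcont 0
  have hcdU : Continuous (deriv U) := by simpa [iteratedDeriv_one] using hcont 1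
  have hLc : Continuous fun x => f x * U x * iteratedDeriv 6 U x :=
    (hcf0.mul hcU0).mul (hcont 6)
  have hRc : Continuous fun x =>
      (-(f x) * (iteratedDeriv 3 U x) ^ 2
        + 9/2 * iteratedDeriv 2 f x * (iteratedDeriv 2 U x) ^ 2
        - 3 * iteratedDeriv 4 f x * (deriv U x) ^ 2
        + 1/2 * iteratedDeriv 6 f x * (U x) ^ 2) := by
    have h2 := hcontf 2; have h4 := hcontf 4; have h6 := hcontf 6
    have k2 := hcont 2; have k3 := hcont 3
    fun_prop
  have hDc : Continuous fun x => f x * U x * iteratedDeriv 6 U x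
      - (-(f x) * (iteratedDeriv 3 U x) ^ 2
          + 9/2 * iteratedDeriv 2 f x * (iteratedDeriv 2 U x) ^ 2
          - 3 * iteratedDeriv 4 f x * (deriv U x) ^ 2
          + 1/2 * iteratedDeriv 6 f x * (U x) ^ 2) := hLc.sub hRc
  have key := intervalIntegral.integral_eq_sub_of_hasDerivAt
    (f := fun x =>
      iteratedDeriv 0 f x * iteratedDeriv 0 U x * iteratedDeriv 5 U x
      - iteratedDeriv 0 f x * iteratedDeriv 1 U x * iteratedDeriv 4 U x
      + iteratedDeriv 0 f x * iteratedDeriv 2 U x * iteratedDeriv 3 U x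
      - iteratedDeriv 1 f x * iteratedDeriv 0 U x * iteratedDeriv 4 U x
      + 2 * (iteratedDeriv 1 f x * iteratedDeriv 1 U x * iteratedDeriv 3 U x)
      - 3/2 * (iteratedDeriv 1 f x * iteratedDeriv 2 U x ^ 2)
      + iteratedDeriv 2 f x * iteratedDeriv 0 U x * iteratedDeriv 3 U x
      - 3 * (iteratedDeriv 2 f x * iteratedDeriv 1 U x * iteratedDeriv 2 U x)
      - iteratedDeriv 3 f x * iteratedDeriv 0 U x * iteratedDeriv 2 U x
      + 2 * (iteratedDeriv 3 f x * iteratedDeriv 1 U x ^ 2)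
      + iteratedDeriv 4 f x * iteratedDeriv 0 U x * iteratedDeriv 1 U x
      - 1/2 * (iteratedDeriv 5 f x * iteratedDeriv 0 U x ^ 2))
    (fun x _ => hGderiv x) (hDc.intervalIntegrable a b)
  have hz : (∫ x in a..b, (f x * U x * iteratedDeriv 6 U x
      - (-(f x) * (iteratedDeriv 3 U x) ^ 2
          + 9/2 * iteratedDeriv 2 f x * (iteratedDeriv 2 U x) ^ 2
          - 3 * iteratedDeriv 4 f x * (deriv U x) ^ 2
          + 1/2 * iteratedDeriv 6 f x * (U x) ^ 2))) = 0 := by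
    rw [key]
    simp [iteratedDeriv_zero, iteratedDeriv_one, hUa, hUb, hU1a, hU1b, hU2a, hU2b,
      hU3a, hU3b]
  rw [intervalIntegral.integral_sub (hLc.intervalIntegrable a b)
    (hRc.intervalIntegrable a b)] at hz
  linarith
end

section
/- Let a < b, let f : [a, b] → ℝ be smooth, and let U : [a, b] → ℝ be smooth with U, U′, U″, U‴ all vanishing at both endpoints a and b. Then ∫ₐᵇ f·U·U⁽⁵⁾ dξ = ∫ₐᵇ (−(5/2)·f′·(U″)² + (5/2)·f‴·(U′)² − (1/2)·f⁽⁵⁾·U²) dξ. -/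
/-- Second variation reduction formula: `∫ f·U·U⁽⁵⁾ = ∫ (−(5/2)f′(U″)²
+ (5/2)f‴(U′)² − (1/2)f⁽⁵⁾U²)` for `U` with `U, U′, U″, U‴` vanishing at the endpoints. -/
theorem second_variation_reduction_five
    (a b : ℝ) (hab : a < b) (f U : ℝ → ℝ)
    (hf : ContDiff ℝ (⊤ : ℕ∞) f) (hU : ContDiff ℝ (⊤ : ℕ∞) U)
    (hUa : U a = 0) (hUb : U b = 0)
    (hU1a : deriv U a = 0) (hU1b : deriv U b = 0)
    (hU2a : iteratedDeriv 2 U a = 0) (hU2b : iteratedDeriv 2 U b = 0)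
    (hU3a : iteratedDeriv 3 U a = 0) (hU3b : iteratedDeriv 3 U b = 0) :
    (∫ ξ in a..b, f ξ * U ξ * iteratedDeriv 5 U ξ)
      = ∫ ξ in a..b,
          (-(5/2) * deriv f ξ * (iteratedDeriv 2 U ξ) ^ 2
            + 5/2 * iteratedDeriv 3 f ξ * (deriv U ξ) ^ 2
            - 1/2 * iteratedDeriv 5 f ξ * (U ξ) ^ 2) := by
  -- smoothness of iterated derivatives
  have hfi : ∀ n : ℕ, ContDiff ℝ ((⊤ : ℕ∞) : WithTop ℕ∞) (iteratedDeriv n f) := by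
    intro n; rw [iteratedDeriv_eq_iterate]; exact (hf.of_le (by simp)).iterate_deriv n
  have hUi : ∀ n : ℕ, ContDiff ℝ ((⊤ : ℕ∞) : WithTop ℕ∞) (iteratedDeriv n U) := by
    intro n; rw [iteratedDeriv_eq_iterate]; exact (hU.of_le (by simp)).iterate_deriv n
  have hdf : ∀ (n : ℕ) (x : ℝ),
      HasDerivAt (iteratedDeriv n f) (iteratedDeriv (n + 1) f x) x := by
    intro n x
    rw [iteratedDeriv_succ]
    exact ((hfi n).differentiable (by simp) x).hasDerivAt
  have hdU : ∀ (n : ℕ) (x : ℝ),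
      HasDerivAt (iteratedDeriv n U) (iteratedDeriv (n + 1) U x) x := by
    intro n x
    rw [iteratedDeriv_succ]
    exact ((hUi n).differentiable (by simp) x).hasDerivAt
  have hdf0 : ∀ x : ℝ, HasDerivAt f (iteratedDeriv 1 f x) x := by
    intro x; simpa [iteratedDeriv_zero] using hdf 0 x
  have hdU0 : ∀ x : ℝ, HasDerivAt U (iteratedDeriv 1 U x) x := by
    intro x; simpa [iteratedDeriv_zero] using hdU 0 x
  -- the antiderivative of the difference of the two integrands
  set g : ℝ → ℝ := fun x =>
    f x * U x * iteratedDeriv 4 U x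
    - f x * iteratedDeriv 1 U x * iteratedDeriv 3 U x
    + (1/2 : ℝ) * (f x * iteratedDeriv 2 U x ^ 2)
    - iteratedDeriv 1 f x * U x * iteratedDeriv 3 U x
    + (2 : ℝ) * (iteratedDeriv 1 f x * iteratedDeriv 1 U x * iteratedDeriv 2 U x)
    + iteratedDeriv 2 f x * U x * iteratedDeriv 2 U x
    - (3/2 : ℝ) * (iteratedDeriv 2 f x * iteratedDeriv 1 U x ^ 2)
    - iteratedDeriv 3 f x * (U x * iteratedDeriv 1 U x)
    + (1/2 : ℝ) * (iteratedDeriv 4 f x * U x ^ 2) with hg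
  have key : ∀ x : ℝ, HasDerivAt g
      (f x * U x * iteratedDeriv 5 U x
        - (-(5/2) * deriv f x * (iteratedDeriv 2 U x) ^ 2
            + 5/2 * iteratedDeriv 3 f x * (deriv U x) ^ 2
            - 1/2 * iteratedDeriv 5 f x * (U x) ^ 2)) x := by
    intro x
    have H := ((((((((((hdf0 x).mul (hdU0 x)).mul (hdU 4 x)).sub
      (((hdf0 x).mul (hdU 1 x)).mul (hdU 3 x))).add
      (((hdf0 x).mul ((hdU 2 x).pow 2)).const_mul (1/2 : ℝ))).sub
      (((hdf 1 x).mul (hdU0 x)).mul (hdU 3 x))).add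
      ((((hdf 1 x).mul (hdU 1 x)).mul (hdU 2 x)).const_mul (2 : ℝ))).add
      (((hdf 2 x).mul (hdU0 x)).mul (hdU 2 x))).sub
      (((hdf 2 x).mul ((hdU 1 x).pow 2)).const_mul (3/2 : ℝ))).sub
      ((hdf 3 x).mul ((hdU0 x).mul (hdU 1 x)))).add
      (((hdf 4 x).mul ((hdU0 x).pow 2)).const_mul (1/2 : ℝ))
    convert H using 1
    · rfl
    · rfl
    · rfl
    have e1 : deriv f x = iteratedDeriv 1 f x := by rw [iteratedDeriv_one]
    have e2 : deriv U x = iteratedDeriv 1 U x := by rw [iteratedDeriv_one]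
    rw [e1, e2]
    simp only [Pi.mul_apply, Pi.pow_apply]
    ring
  -- integrability of the two integrands
  have hc1 : Continuous fun x => f x * U x * iteratedDeriv 5 U x :=
    (hf.continuous.mul hU.continuous).mul (hUi 5).continuous
  have hc2 : Continuous fun x =>
      (-(5/2) * deriv f x * (iteratedDeriv 2 U x) ^ 2
        + 5/2 * iteratedDeriv 3 f x * (deriv U x) ^ 2
        - 1/2 * iteratedDeriv 5 f x * (U x) ^ 2) := by
    have hdf' : Continuous (deriv f) := hf.continuous_deriv (by simp)
    have hdU' : Continuous (deriv U) := hU.continuous_deriv (by simp)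
    exact (((continuous_const.mul hdf').mul ((hUi 2).continuous.pow 2)).add
      ((continuous_const.mul (hfi 3).continuous).mul (hdU'.pow 2))).sub
      ((continuous_const.mul (hfi 5).continuous).mul (hU.continuous.pow 2))
  have hi1 : IntervalIntegrable (fun x => f x * U x * iteratedDeriv 5 U x)
      MeasureTheory.volume a b := hc1.intervalIntegrable a b
  have hi2 : IntervalIntegrable (fun x =>
      (-(5/2) * deriv f x * (iteratedDeriv 2 U x) ^ 2
        + 5/2 * iteratedDeriv 3 f x * (deriv U x) ^ 2
        - 1/2 * iteratedDeriv 5 f x * (U x) ^ 2))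
      MeasureTheory.volume a b := hc2.intervalIntegrable a b
  have hdiff : (∫ ξ in a..b,
      (f ξ * U ξ * iteratedDeriv 5 U ξ
        - (-(5/2) * deriv f ξ * (iteratedDeriv 2 U ξ) ^ 2
            + 5/2 * iteratedDeriv 3 f ξ * (deriv U ξ) ^ 2
            - 1/2 * iteratedDeriv 5 f ξ * (U ξ) ^ 2))) = g b - g a := by
    refine intervalIntegral.integral_eq_sub_of_hasDerivAt (fun x _ => key x) ?_
    exact (hi1.sub hi2)
  have hU1a' : iteratedDeriv 1 U a = 0 := by rw [iteratedDeriv_one]; exact hU1a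
  have hU1b' : iteratedDeriv 1 U b = 0 := by rw [iteratedDeriv_one]; exact hU1b
  have hga : g a = 0 := by
    simp [hg, hUa, hU1a', hU1a, hU2a, hU3a]
  have hgb : g b = 0 := by
    simp [hg, hUb, hU1b', hU1b, hU2b, hU3b]
  rw [intervalIntegral.integral_sub hi1 hi2] at hdiff
  rw [hga, hgb] at hdiff
  linarith [hdiff]
end

section
/- Let a, b > 0 and v ∈ ℝ², and define C : ℝ × ℝ → ℝ² by C(θ, t) = e^{−t/9}·(a·cos θ, b·sin θ) + v. Let D₁ = det(∂_θC, ∂²_θC), D₂ = det(∂_θC, ∂³_θC), D₃ = det(∂_θC, ∂⁴_θC), D₄ = det(∂²_θC, ∂³_θC). Then for all (θ, t): (i) (3·D₁·D₃ − 5·D₂² + 12·D₁·D₄)/D₁² = 9, so the fully affine metric g = √((3D₁D₃ − 5D₂² + 12D₁D₄)/D₁²) equals 3 identically; and (ii) ∂_t C(θ, t) = (1/9)·∂²_θ C(θ, t), i.e. C satisfies the fully affine heat flow ∂_t C = g^{−1}∂_θ(g^{−1}∂_θ C). Hence the ellipse is a shrinking soliton of the fully affine heat flow. -/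
/-!
For an ellipse `C x = cos x • u + sin x • w + p` one has `C'' = -(C - p)`, `C''' = -C'` and
`C'''' = C - p`, while `det(C - p, C') = det(u, w)` is constant: the ellipse sweeps area at a
constant rate. Hence `D₁ = D₄ = det(u, w)`, `D₃ = -det(u, w)` and `D₂ = 0`, so the radicand
is `(-3 + 12) det(u, w)² / det(u, w)² = 9` for every nondegenerate ellipse. In time,
`∂_t C = -(1/9)(C - v) = (1/9) ∂²_θ C`.
-/

/-- Determinant of the 2×2 matrix with columns `u, w ∈ ℝ²`. -/
def det2 (u w : ℝ × ℝ) : ℝ := u.1 * w.2 - u.2 * w.1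

theorem det2_swap (u w : ℝ × ℝ) : det2 w u = -det2 u w := by
  unfold det2; ring

theorem det2_self (u : ℝ × ℝ) : det2 u u = 0 := by
  unfold det2; ring

theorem det2_neg_left (u w : ℝ × ℝ) : det2 (-u) w = -det2 u w := by
  unfold det2; simp only [Prod.fst_neg, Prod.snd_neg]; ring

theorem det2_neg_right (u w : ℝ × ℝ) : det2 u (-w) = -det2 u w := by
  unfold det2; simp only [Prod.fst_neg, Prod.snd_neg]; ring

section EllipseCurve

variable {E : Type*} [NormedAddCommGroup E] [NormedSpace ℝ E]

noncomputable def ellipseCurve (u w p : E) (x : ℝ) : E := Real.cos x • u + Real.sin x • w + p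

theorem ellipseCurve_neg (u w : E) : ellipseCurve (-u) (-w) 0 = -ellipseCurve u w 0 := by
  funext x
  simp only [ellipseCurve, smul_neg, add_zero, Pi.neg_apply, neg_add]

theorem hasDerivAt_ellipseCurve (u w p : E) (x : ℝ) :
    HasDerivAt (ellipseCurve u w p) (ellipseCurve w (-u) 0 x) x := by
  convert (((Real.hasDerivAt_cos x).smul_const u).fun_add
    ((Real.hasDerivAt_sin x).smul_const w)).add_const p using 1
  · rfl
  · simp only [ellipseCurve, smul_neg, neg_smul, add_zero]
    abel

theorem deriv_ellipseCurve (u w p : E) :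
    deriv (ellipseCurve u w p) = ellipseCurve w (-u) 0 :=
  funext fun x => (hasDerivAt_ellipseCurve u w p x).deriv

theorem iteratedDeriv_two_ellipseCurve (u w p : E) :
    iteratedDeriv 2 (ellipseCurve u w p) = -ellipseCurve u w 0 := by
  simp only [iteratedDeriv_succ, iteratedDeriv_zero, deriv_ellipseCurve, ellipseCurve_neg]

theorem iteratedDeriv_three_ellipseCurve (u w p : E) :
    iteratedDeriv 3 (ellipseCurve u w p) = -ellipseCurve w (-u) 0 := by
  rw [iteratedDeriv_succ', deriv_ellipseCurve, iteratedDeriv_two_ellipseCurve]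

theorem iteratedDeriv_four_ellipseCurve (u w p : E) :
    iteratedDeriv 4 (ellipseCurve u w p) = ellipseCurve u w 0 := by
  rw [iteratedDeriv_succ', iteratedDeriv_succ', deriv_ellipseCurve, deriv_ellipseCurve,
    iteratedDeriv_two_ellipseCurve, ellipseCurve_neg, neg_neg]

theorem hasDerivAt_exp_neg_div_smul_add (c : ℝ) (X v : E) (t : ℝ) :
    HasDerivAt (fun s => Real.exp (-s / c) • X + v) (-(Real.exp (-t / c) / c) • X) t := by
  convert ((((hasDerivAt_neg t).div_const c).exp).smul_const X).add_const v using 2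
  ring

end EllipseCurve

theorem det2_ellipseCurve_deriv (u w : ℝ × ℝ) (x : ℝ) :
    det2 (ellipseCurve u w 0 x) (ellipseCurve w (-u) 0 x) = det2 u w := by
  simp only [ellipseCurve, det2, Prod.fst_add, Prod.snd_add, Prod.smul_fst, Prod.smul_snd,
    smul_eq_mul, Prod.fst_zero, Prod.snd_zero, Prod.fst_neg, Prod.snd_neg]
  linear_combination (u.1 * w.2 - u.2 * w.1) * Real.sin_sq_add_cos_sq x

noncomputable def fullyAffineRadicand (γ : ℝ → ℝ × ℝ) (x : ℝ) : ℝ :=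
  let D1 := det2 (deriv γ x) (iteratedDeriv 2 γ x)
  let D2 := det2 (deriv γ x) (iteratedDeriv 3 γ x)
  let D3 := det2 (deriv γ x) (iteratedDeriv 4 γ x)
  let D4 := det2 (iteratedDeriv 2 γ x) (iteratedDeriv 3 γ x)
  (3 * D1 * D3 - 5 * D2 ^ 2 + 12 * D1 * D4) / D1 ^ 2

theorem fullyAffineRadicand_ellipseCurve {u w : ℝ × ℝ} (huw : det2 u w ≠ 0) (p : ℝ × ℝ)
    (x : ℝ) : fullyAffineRadicand (ellipseCurve u w p) x = 9 := by
  simp only [fullyAffineRadicand, deriv_ellipseCurve, iteratedDeriv_two_ellipseCurve,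
    iteratedDeriv_three_ellipseCurve, iteratedDeriv_four_ellipseCurve, Pi.neg_apply,
    det2_neg_left, det2_neg_right, neg_neg, det2_self, det2_ellipseCurve_deriv,
    det2_swap (ellipseCurve u w 0 x)]
  field_simp
  ring

/-- Example 7.1: the shrinking family of ellipses
`C(θ,t) = e^{−t/9}(a cos θ, b sin θ) + v` has fully affine metric `g ≡ 3` and
satisfies the fully affine heat flow `∂_t C = (1/9)∂²_θ C = ∂²C/∂ξ²`. -/
theorem ellipse_shrinking_soliton
    (a b : ℝ) (ha : 0 < a) (hb : 0 < b) (v : ℝ × ℝ) (θ t : ℝ) :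
    let C : ℝ → ℝ → ℝ × ℝ := fun θ' t' =>
      (Real.exp (-t' / 9) * (a * Real.cos θ') + v.1,
       Real.exp (-t' / 9) * (b * Real.sin θ') + v.2)
    let D1 := det2 (deriv (fun θ' => C θ' t) θ) (iteratedDeriv 2 (fun θ' => C θ' t) θ)
    let D2 := det2 (deriv (fun θ' => C θ' t) θ) (iteratedDeriv 3 (fun θ' => C θ' t) θ)
    let D3 := det2 (deriv (fun θ' => C θ' t) θ) (iteratedDeriv 4 (fun θ' => C θ' t) θ)
    let D4 := det2 (iteratedDeriv 2 (fun θ' => C θ' t) θ) (iteratedDeriv 3 (fun θ' => C θ' t) θ)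
    ((3 * D1 * D3 - 5 * D2 ^ 2 + 12 * D1 * D4) / D1 ^ 2 = 9 ∧
      Real.sqrt ((3 * D1 * D3 - 5 * D2 ^ 2 + 12 * D1 * D4) / D1 ^ 2) = 3) ∧
    deriv (fun t' => C θ t') t = (1 / 9 : ℝ) • iteratedDeriv 2 (fun θ' => C θ' t) θ := by
  intro C D1 D2 D3 D4
  have hslice : (fun θ' => C θ' t) =
      ellipseCurve (Real.exp (-t / 9) * a, 0) (0, Real.exp (-t / 9) * b) v := by
    funext x
    ext <;> simp only [C, ellipseCurve, Prod.fst_add, Prod.snd_add, Prod.smul_fst,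
      Prod.smul_snd, smul_eq_mul] <;> ring
  have hdet : det2 (Real.exp (-t / 9) * a, 0) (0, Real.exp (-t / 9) * b) ≠ 0 := by
    simp only [det2, mul_zero, sub_zero]
    positivity
  have hg : fullyAffineRadicand (fun θ' => C θ' t) θ = 9 :=
    hslice ▸ fullyAffineRadicand_ellipseCurve hdet v θ
  refine ⟨⟨hg, ?_⟩, ?_⟩
  · rw [show (3 * D1 * D3 - 5 * D2 ^ 2 + 12 * D1 * D4) / D1 ^ 2 = 3 ^ 2 from
      hg.trans (by norm_num)]
    exact Real.sqrt_sq zero_le_three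
  · have hflow : (fun t' => C θ t') =
        fun s => Real.exp (-s / 9) • (a * Real.cos θ, b * Real.sin θ) + v := rfl
    rw [hflow, (hasDerivAt_exp_neg_div_smul_add 9 _ v t).deriv, hslice,
      iteratedDeriv_two_ellipseCurve]
    ext <;> simp only [ellipseCurve, Pi.neg_apply, Prod.fst_add, Prod.snd_add, Prod.smul_fst,
      Prod.smul_snd, smul_eq_mul, Prod.fst_neg, Prod.snd_neg, Prod.fst_zero, Prod.snd_zero] <;>
      ring
end
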